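/- Let σ > 0, η ≠ 0, and real constants r̄ ≥ r̲, μ̄¹ ≥ μ̲¹, μ̄² ≥ μ̲². Define f : ℝ³ → ℝ by f(y,z,c) = −r̲ (y − z/σ − c/η)^+ + r̄ (y − z/σ − c/η)^− − μ̲¹ z^+/σ + μ̄¹ z^−/σ − μ̲² (c/η)^+ + μ̄² (c/η)^−. Then its convex conjugate f*(α,β,γ) = sup over (y,z,c) ∈ ℝ³ of [αy + βz + γc − f(y,z,c)] satisfies: f*(α,β,γ) = 0 if −r̄ ≤ α ≤ −r̲, −μ̄¹ ≤ α + σβ ≤ −μ̲¹, and −μ̄² ≤ α + ηγ ≤ −μ̲²; and f*(α,β,γ) = +∞ otherwise. In particular, the effective domain of f* is the set D = {(α,β,γ) ∈ ℝ³ : −r̄ ≤ α ≤ −r̲, −μ̄¹ ≤ α + σβ ≤ −μ̲¹, −μ̄² ≤ α + ηγ ≤ −μ̲²}. -/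

import Mathlib

open scoped EReal

noncomputable section

/-- The bid-ask generator `f(y,z,c)` of the American option example. -/
def bidaskGenerator (σ η rl rh μ1l μ1h μ2l μ2h : ℝ) (q : ℝ × ℝ × ℝ) : ℝ :=
  -rl * max (q.1 - q.2.1 / σ - q.2.2 / η) 0
    + rh * max (-(q.1 - q.2.1 / σ - q.2.2 / η)) 0
    - μ1l * max q.2.1 0 / σ + μ1h * max (-q.2.1) 0 / σ
    - μ2l * max (q.2.2 / η) 0 + μ2h * max (-(q.2.2 / η)) 0

/-- The convex conjugate `f*(α,β,γ) = sup_{(y,z,c)} [α y + β z + γ c − f(y,z,c)]`,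
with values in `EReal`. -/
def bidaskConjugate (σ η rl rh μ1l μ1h μ2l μ2h : ℝ) (p : ℝ × ℝ × ℝ) : EReal :=
  ⨆ q : ℝ × ℝ × ℝ,
    ((p.1 * q.1 + p.2.1 * q.2.1 + p.2.2 * q.2.2
      - bidaskGenerator σ η rl rh μ1l μ1h μ2l μ2h q : ℝ) : EReal)

/-!
In the coordinates `u = y - z/σ - c/η`, `v = z/σ`, `w = c/η` the function
`αy + βz + γc - f(y,z,c)` splits as `k(α, r̲, r̄; u) + k(α + σβ, μ̲¹, μ̄¹; v) + k(α + ηγ, μ̲², μ̄²; w)`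
with `k(a, l, h; t) = a t + l t⁺ - h t⁻`, which has slope `a + l` on `t ≥ 0` and `a + h` on `t ≤ 0`.
Such a kinked line is `≤ 0` everywhere, with value `0` at `0`, when `-h ≤ a ≤ -l`,
and is unbounded above otherwise; so the supremum is `0` or `+∞` accordingly.
-/

theorem EReal.iSup_coe_eq_zero {ι : Type*} {F : ι → ℝ} (hF : ∀ i, F i ≤ 0) (i₀ : ι)
    (h₀ : F i₀ = 0) : ⨆ i, (F i : EReal) = 0 :=
  le_antisymm (iSup_le fun i => EReal.coe_nonpos.2 (hF i))
    (le_iSup_of_le i₀ (by rw [h₀, EReal.coe_zero]))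

theorem EReal.iSup_coe_eq_top {ι : Type*} {F : ι → ℝ} (hF : ∀ M, ∃ i, M ≤ F i) :
    ⨆ i, (F i : EReal) = ⊤ := by
  refine (EReal.eq_top_iff_forall_lt _).2 fun M => ?_
  obtain ⟨i, hi⟩ := hF (M + 1)
  exact lt_iSup_iff.2 ⟨i, EReal.coe_lt_coe_iff.2 (by linarith)⟩

def kinkedLinear (a l h t : ℝ) : ℝ := a * t + l * max t 0 - h * max (-t) 0

section kinkedLinear

variable {a l h t : ℝ}

@[simp]
theorem kinkedLinear_zero : kinkedLinear a l h 0 = 0 := by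
  simp [kinkedLinear]

theorem kinkedLinear_of_nonneg (ht : 0 ≤ t) : kinkedLinear a l h t = (a + l) * t := by
  rw [kinkedLinear, max_eq_left ht, max_eq_right (neg_nonpos.2 ht)]
  ring

theorem kinkedLinear_of_nonpos (ht : t ≤ 0) : kinkedLinear a l h t = (a + h) * t := by
  rw [kinkedLinear, max_eq_right ht, max_eq_left (neg_nonneg.2 ht)]
  ring

theorem kinkedLinear_nonpos (ha : a ∈ Set.Icc (-h) (-l)) (t : ℝ) : kinkedLinear a l h t ≤ 0 := by
  rcases le_total 0 t with ht | ht
  · rw [kinkedLinear_of_nonneg ht]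
    exact mul_nonpos_of_nonpos_of_nonneg (by linarith [ha.2]) ht
  · rw [kinkedLinear_of_nonpos ht]
    exact mul_nonpos_of_nonneg_of_nonpos (by linarith [ha.1]) ht

theorem exists_le_kinkedLinear (ha : a ∉ Set.Icc (-h) (-l)) (M : ℝ) :
    ∃ t, M ≤ kinkedLinear a l h t := by
  rcases lt_or_ge a (-h) with hah | hah
  · have hneg : a + h < 0 := by linarith
    refine ⟨|M| / (a + h), ?_⟩
    rw [kinkedLinear_of_nonpos (div_nonpos_of_nonneg_of_nonpos (abs_nonneg M) hneg.le),
      mul_div_cancel₀ _ hneg.ne]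
    exact le_abs_self M
  · have hpos : 0 < a + l := by linarith [lt_of_not_ge fun hal => ha ⟨hah, hal⟩]
    refine ⟨|M| / (a + l), ?_⟩
    rw [kinkedLinear_of_nonneg (div_nonneg (abs_nonneg M) hpos.le),
      mul_div_cancel₀ _ hpos.ne']
    exact le_abs_self M

end kinkedLinear

section bidask

variable {σ η rl rh μ1l μ1h μ2l μ2h : ℝ}

theorem sub_bidaskGenerator_eq_kinkedLinear_add (hσ : 0 < σ) (hη : η ≠ 0) (p q : ℝ × ℝ × ℝ) :
    p.1 * q.1 + p.2.1 * q.2.1 + p.2.2 * q.2.2 - bidaskGenerator σ η rl rh μ1l μ1h μ2l μ2h q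
      = kinkedLinear p.1 rl rh (q.1 - q.2.1 / σ - q.2.2 / η)
        + kinkedLinear (p.1 + σ * p.2.1) μ1l μ1h (q.2.1 / σ)
        + kinkedLinear (p.1 + η * p.2.2) μ2l μ2h (q.2.2 / η) := by
  have hpos : max q.2.1 0 / σ = max (q.2.1 / σ) 0 := by
    rw [← max_div_div_right hσ.le, zero_div]
  have hneg : max (-q.2.1) 0 / σ = max (-(q.2.1 / σ)) 0 := by
    rw [← max_div_div_right hσ.le, zero_div, neg_div]
  simp only [bidaskGenerator, kinkedLinear, mul_div_assoc, hpos, hneg]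
  field_simp
  ring

theorem bidaskConjugate_eq_iSup_kinkedLinear (hσ : 0 < σ) (hη : η ≠ 0) (p : ℝ × ℝ × ℝ) :
    bidaskConjugate σ η rl rh μ1l μ1h μ2l μ2h p
      = ⨆ x : ℝ × ℝ × ℝ, ((kinkedLinear p.1 rl rh x.1
          + kinkedLinear (p.1 + σ * p.2.1) μ1l μ1h x.2.1
          + kinkedLinear (p.1 + η * p.2.2) μ2l μ2h x.2.2 : ℝ) : EReal) := by
  have hsurj : Function.Surjective
      fun q : ℝ × ℝ × ℝ => (q.1 - q.2.1 / σ - q.2.2 / η, q.2.1 / σ, q.2.2 / η) := by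
    rintro ⟨u, v, w⟩
    refine ⟨(u + v + w, σ * v, η * w), ?_⟩
    simp only [Prod.mk.injEq]
    field_simp
    simp only [and_true]
    ring
  conv_rhs => rw [← hsurj.iSup_comp]
  simp only [bidaskConjugate, sub_bidaskGenerator_eq_kinkedLinear_add hσ hη]

def bidaskDomain (σ η rl rh μ1l μ1h μ2l μ2h : ℝ) : Set (ℝ × ℝ × ℝ) :=
  {p | -rh ≤ p.1 ∧ p.1 ≤ -rl ∧ -μ1h ≤ p.1 + σ * p.2.1 ∧ p.1 + σ * p.2.1 ≤ -μ1l ∧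
    -μ2h ≤ p.1 + η * p.2.2 ∧ p.1 + η * p.2.2 ≤ -μ2l}

theorem bidaskConjugate_eq_zero (hσ : 0 < σ) (hη : η ≠ 0) {p : ℝ × ℝ × ℝ}
    (hp : p ∈ bidaskDomain σ η rl rh μ1l μ1h μ2l μ2h) :
    bidaskConjugate σ η rl rh μ1l μ1h μ2l μ2h p = 0 := by
  obtain ⟨hr₁, hr₂, hμ₁, hμ₂, hν₁, hν₂⟩ := hp
  rw [bidaskConjugate_eq_iSup_kinkedLinear hσ hη]
  refine EReal.iSup_coe_eq_zero (fun x => ?_) 0 (by simp)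
  linarith [kinkedLinear_nonpos ⟨hr₁, hr₂⟩ x.1, kinkedLinear_nonpos ⟨hμ₁, hμ₂⟩ x.2.1,
    kinkedLinear_nonpos ⟨hν₁, hν₂⟩ x.2.2]

theorem bidaskConjugate_eq_top (hσ : 0 < σ) (hη : η ≠ 0) {p : ℝ × ℝ × ℝ}
    (hp : p ∉ bidaskDomain σ η rl rh μ1l μ1h μ2l μ2h) :
    bidaskConjugate σ η rl rh μ1l μ1h μ2l μ2h p = ⊤ := by
  rw [bidaskConjugate_eq_iSup_kinkedLinear hσ hη]
  refine EReal.iSup_coe_eq_top fun M => ?_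
  by_cases hr : p.1 ∈ Set.Icc (-rh) (-rl)
  · by_cases hμ : p.1 + σ * p.2.1 ∈ Set.Icc (-μ1h) (-μ1l)
    · obtain ⟨t, ht⟩ := exists_le_kinkedLinear
        (fun hν => hp ⟨hr.1, hr.2, hμ.1, hμ.2, hν.1, hν.2⟩) M
      exact ⟨(0, 0, t), by simpa using ht⟩
    · obtain ⟨t, ht⟩ := exists_le_kinkedLinear hμ M
      exact ⟨(0, t, 0), by simpa using ht⟩
  · obtain ⟨t, ht⟩ := exists_le_kinkedLinear hr M
    exact ⟨(t, 0, 0), by simpa using ht⟩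

theorem setOf_bidaskConjugate_ne_top (hσ : 0 < σ) (hη : η ≠ 0) :
    {p | bidaskConjugate σ η rl rh μ1l μ1h μ2l μ2h p ≠ ⊤} = bidaskDomain σ η rl rh μ1l μ1h μ2l μ2h :=
  Set.ext fun _ => ⟨fun hne => not_not.1 fun hp => hne (bidaskConjugate_eq_top hσ hη hp),
    fun hp => by simp [bidaskConjugate_eq_zero hσ hη hp]⟩

end bidask

theorem bidask_conjugate_eq_general (σ η : ℝ) (hσ : 0 < σ) (hη : η ≠ 0)
    (rl rh μ1l μ1h μ2l μ2h : ℝ) :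
    (∀ p : ℝ × ℝ × ℝ,
      ((-rh ≤ p.1 ∧ p.1 ≤ -rl ∧ -μ1h ≤ p.1 + σ * p.2.1 ∧ p.1 + σ * p.2.1 ≤ -μ1l ∧
          -μ2h ≤ p.1 + η * p.2.2 ∧ p.1 + η * p.2.2 ≤ -μ2l) →
        bidaskConjugate σ η rl rh μ1l μ1h μ2l μ2h p = 0) ∧
      (¬ (-rh ≤ p.1 ∧ p.1 ≤ -rl ∧ -μ1h ≤ p.1 + σ * p.2.1 ∧ p.1 + σ * p.2.1 ≤ -μ1l ∧
          -μ2h ≤ p.1 + η * p.2.2 ∧ p.1 + η * p.2.2 ≤ -μ2l) →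
        bidaskConjugate σ η rl rh μ1l μ1h μ2l μ2h p = ⊤)) ∧
    {p : ℝ × ℝ × ℝ | bidaskConjugate σ η rl rh μ1l μ1h μ2l μ2h p ≠ ⊤}
      = {p : ℝ × ℝ × ℝ | -rh ≤ p.1 ∧ p.1 ≤ -rl ∧
          -μ1h ≤ p.1 + σ * p.2.1 ∧ p.1 + σ * p.2.1 ≤ -μ1l ∧
          -μ2h ≤ p.1 + η * p.2.2 ∧ p.1 + η * p.2.2 ≤ -μ2l} :=
  ⟨fun _ => ⟨bidaskConjugate_eq_zero hσ hη, bidaskConjugate_eq_top hσ hη⟩,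
    setOf_bidaskConjugate_ne_top hσ hη⟩

/-- **The convex conjugate of the bid-ask generator.**
For `σ > 0`, `η ≠ 0`, `r̲ ≤ r̄`, `μ̲¹ ≤ μ̄¹`, `μ̲² ≤ μ̄²`: the conjugate `f*` equals `0` on
`D = {(α,β,γ) : −r̄ ≤ α ≤ −r̲, −μ̄¹ ≤ α + σβ ≤ −μ̲¹, −μ̄² ≤ α + ηγ ≤ −μ̲²}` and `+∞`
off `D`; in particular the effective domain of `f*` is `D`. -/
theorem bidask_conjugate_eq (σ η : ℝ) (hσ : 0 < σ) (hη : η ≠ 0)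
    (rl rh μ1l μ1h μ2l μ2h : ℝ) (hr : rl ≤ rh) (hμ1 : μ1l ≤ μ1h) (hμ2 : μ2l ≤ μ2h) :
    (∀ p : ℝ × ℝ × ℝ,
      ((-rh ≤ p.1 ∧ p.1 ≤ -rl ∧ -μ1h ≤ p.1 + σ * p.2.1 ∧ p.1 + σ * p.2.1 ≤ -μ1l ∧
          -μ2h ≤ p.1 + η * p.2.2 ∧ p.1 + η * p.2.2 ≤ -μ2l) →
        bidaskConjugate σ η rl rh μ1l μ1h μ2l μ2h p = 0) ∧
      (¬ (-rh ≤ p.1 ∧ p.1 ≤ -rl ∧ -μ1h ≤ p.1 + σ * p.2.1 ∧ p.1 + σ * p.2.1 ≤ -μ1l ∧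
          -μ2h ≤ p.1 + η * p.2.2 ∧ p.1 + η * p.2.2 ≤ -μ2l) →
        bidaskConjugate σ η rl rh μ1l μ1h μ2l μ2h p = ⊤)) ∧
    {p : ℝ × ℝ × ℝ | bidaskConjugate σ η rl rh μ1l μ1h μ2l μ2h p ≠ ⊤}
      = {p : ℝ × ℝ × ℝ | -rh ≤ p.1 ∧ p.1 ≤ -rl ∧
          -μ1h ≤ p.1 + σ * p.2.1 ∧ p.1 + σ * p.2.1 ≤ -μ1l ∧
          -μ2h ≤ p.1 + η * p.2.2 ∧ p.1 + η * p.2.2 ≤ -μ2l} :=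
  bidask_conjugate_eq_general σ η hσ hη rl rh μ1l μ1h μ2l μ2h
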